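/- Let a ∈ S^m(ℝⁿ × ℝⁿ). Then a ∈ BS^m(ℝ^{n−1}, ℝ^{n−1}; S^m(ℝ)); in particular, for all γ, δ ∈ ℕ and every compact Q ⊆ ℝⁿ there is C > 0 such that |∂_{ξ_n}^γ ∂_{x_n}^δ [ a(x', x_n/⟨ξ'⟩, ξ', ξ_n⟨ξ'⟩) ]| ≤ C ⟨ξ'⟩^{m} ⟨ξ_n⟩^{m−γ} for all (x', x_n) ∈ Q and all (ξ', ξ_n) ∈ ℝⁿ. (Remark 4.3 and estimate (vero).) -/

import Mathlib

/-!
Substituting `xₙ ↦ xₙ/⟨ξ'⟩`, `ξₙ ↦ ξₙ⟨ξ'⟩`, the chain rule turns `∂_{ξₙ}^γ ∂_{xₙ}^δ` into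
`⟨ξ'⟩^{γ-δ}` times the corresponding derivative of the symbol, and
`⟨(ξ', ξₙ⟨ξ'⟩)⟩ = ⟨ξ'⟩⟨ξₙ⟩`. The symbol estimate of order `m - γ - |α|` therefore gives the bound
`⟨ξ'⟩^{m-δ-|α|} ⟨ξₙ⟩^{m-γ-|α|} ≤ ⟨ξ'⟩^{m-|α|} ⟨ξₙ⟩^{m-γ}`, both brackets being `≥ 1`.
To compare with the order of differentiation in `Sm`, all partial derivatives are viewed as
directional derivatives of the uncurried smooth function, and these commute.
-/

noncomputable section

open Real MeasureTheory

/-- Japanese bracket of a real number: `⟨t⟩ = √(1+t²)`. -/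
def jb (t : ℝ) : ℝ := Real.sqrt (1 + t ^ 2)

/-- Japanese bracket of a vector in `ℝᵏ` (Euclidean norm). -/
def jbV {k : ℕ} (v : Fin k → ℝ) : ℝ := Real.sqrt (1 + ∑ i, v i ^ 2)

/-- Japanese bracket of the full covariable `(ξ', ξₙ) ∈ ℝᵏ⁺¹`. -/
def jbP {k : ℕ} (v : Fin k → ℝ) (t : ℝ) : ℝ := Real.sqrt (1 + (∑ i, v i ^ 2) + t ^ 2)

/-- Euclidean norm of a vector in `ℝᵏ`. -/
def enormV {k : ℕ} (v : Fin k → ℝ) : ℝ := Real.sqrt (∑ i, v i ^ 2)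

/-- Euclidean norm of the full covariable `(ξ', ξₙ)`. -/
def enormP {k : ℕ} (v : Fin k → ℝ) (t : ℝ) : ℝ := Real.sqrt ((∑ i, v i ^ 2) + t ^ 2)

/-- Functions of `(x', xₙ, ξ', ξₙ)` with values in `E`. -/
abbrev Fn (k : ℕ) (E : Type*) := (Fin k → ℝ) → ℝ → (Fin k → ℝ) → ℝ → E

/-- The uncurried version of `f : Fn k E`. -/
def Fn.unc {k : ℕ} {E : Type*} (f : Fn k E) :
    ((Fin k → ℝ) × ℝ × (Fin k → ℝ) × ℝ) → E :=
  fun p => f p.1 p.2.1 p.2.2.1 p.2.2.2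

section Derivs

variable {k : ℕ} {E : Type*} [NormedAddCommGroup E] [NormedSpace ℝ E]

/-- Partial derivative in `xₙ`. -/
def Dxn (f : Fn k E) : Fn k E := fun x' xn ξ' ξn => deriv (fun t => f x' t ξ' ξn) xn

/-- Partial derivative in `ξₙ`. -/
def Dxin (f : Fn k E) : Fn k E := fun x' xn ξ' ξn => deriv (fun t => f x' xn ξ' t) ξn

/-- Partial derivative in the `i`-th coordinate of `x'`. -/
def Dxp (i : Fin k) (f : Fn k E) : Fn k E :=
  fun x' xn ξ' ξn => deriv (fun t => f (Function.update x' i t) xn ξ' ξn) (x' i)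

/-- Partial derivative in the `i`-th coordinate of `ξ'`. -/
def Dxip (i : Fin k) (f : Fn k E) : Fn k E :=
  fun x' xn ξ' ξn => deriv (fun t => f x' xn (Function.update ξ' i t) ξn) (ξ' i)

/-- Multi-index partial derivative `∂ₓ'^β`. -/
def DxpM (β : Fin k → ℕ) (f : Fn k E) : Fn k E :=
  (List.finRange k).foldr (fun i g => (Dxp i)^[β i] g) f

/-- Multi-index partial derivative `∂_ξ'^α`. -/
def DxipM (α : Fin k → ℕ) (f : Fn k E) : Fn k E :=
  (List.finRange k).foldr (fun i g => (Dxip i)^[α i] g) f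

/-- Partial derivative in the first of two real variables. -/
def D1 (F : ℝ → ℝ → E) : ℝ → ℝ → E := fun s t => deriv (fun u => F u t) s

/-- Partial derivative in the second of two real variables. -/
def D2 (F : ℝ → ℝ → E) : ℝ → ℝ → E := fun s t => deriv (fun u => F s u) t

end Derivs

/-- The cut-off function `ω`: smooth, even, non-increasing on `[0,∞)`,
`≡ 1` on `[-1/2,1/2]`, `≡ 0` outside `(-1,1)`. -/
def CutOff (ω : ℝ → ℝ) : Prop :=
  ContDiff ℝ (⊤ : ℕ∞) ω ∧ (∀ t, ω (-t) = ω t) ∧ AntitoneOn ω (Set.Ici 0) ∧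
    (∀ t : ℝ, |t| ≤ 1 / 2 → ω t = 1) ∧ (∀ t : ℝ, 1 ≤ |t| → ω t = 0)

/-- `φ := ψ − ψ_∂`, where `ψ_∂(x',ξ') = ψ(x',0,ξ',0)`. -/
def phiOf {k : ℕ} (ψ : Fn k ℝ) : Fn k ℝ :=
  fun x' xn ξ' ξn => ψ x' xn ξ' ξn - ψ x' 0 ξ' 0

/-- Hypothesis (S): symbol estimates of order `1` for `ψ`, for `x' ∈ Ω'`, `|xₙ| ≤ 2`. -/
def HypS {k : ℕ} (Ω' : Set (Fin k → ℝ)) (ψ : Fn k ℝ) : Prop :=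
  ∀ (a b : ℕ) (α β : Fin k → ℕ), ∃ C > 0, ∀ x' ∈ Ω', ∀ xn : ℝ, |xn| ≤ 2 →
    ∀ (ξ' : Fin k → ℝ) (ξn : ℝ),
      |DxpM β ((Dxn)^[b] (DxipM α ((Dxin)^[a] ψ))) x' xn ξ' ξn| ≤
        C * jbP ξ' ξn ^ ((1 : ℝ) - ((a : ℝ) + ∑ i, (α i : ℝ)))

/-- Hypothesis (B): `∂_{ξₙ}ψ(x',0,ξ',ξₙ) = 0` for `x' ∈ Ω'`. -/
def HypB {k : ℕ} (Ω' : Set (Fin k → ℝ)) (ψ : Fn k ℝ) : Prop :=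
  ∀ x' ∈ Ω', ∀ (ξ' : Fin k → ℝ) (ξn : ℝ), Dxin ψ x' 0 ξ' ξn = 0

/-- The rescaled phase function `*Φ`. -/
def PhiS {k : ℕ} (ω : ℝ → ℝ) (K : ℝ) (ψ : Fn k ℝ) (x' ξ' : Fin k → ℝ) (t τ : ℝ) : ℝ :=
  ω (t / jbV ξ') * phiOf ψ x' (t / jbV ξ') ξ' (τ * jbV ξ')
    + (1 - ω (t / jbV ξ')) * K * t * τ

/-- The symbol class `S^m(ℝⁿ × ℝⁿ)` (in the splitting `(x', xₙ, ξ', ξₙ)`):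
smooth functions all of whose derivatives `∂ₓ^β ∂_ξ^α a` are `O(⟨ξ⟩^{m-|α|})`. -/
def Sm {k : ℕ} (m : ℝ) (a : Fn k ℂ) : Prop :=
  ContDiff ℝ (⊤ : ℕ∞) (Fn.unc a) ∧
  ∀ (p q : ℕ) (α β : Fin k → ℕ), ∃ C > 0,
    ∀ (x' : Fin k → ℝ) (xn : ℝ) (ξ' : Fin k → ℝ) (ξn : ℝ),
      ‖DxpM β ((Dxn)^[q] (DxipM α ((Dxin)^[p] a))) x' xn ξ' ξn‖ ≤
        C * jbP ξ' ξn ^ (m - ((p : ℝ) + ∑ i, (α i : ℝ)))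

/-- The class `BS^μ(ℝ^{n-1}, ℝ^{n-1}; S^l(ℝ))`: a smooth function `b(x', xₙ, ξ', ξₙ)`
belongs to it if for all multi-indices `α, β`, all `γ, δ ∈ ℕ` and every compact `Q ⊆ ℝⁿ`
one has `|∂_{ξₙ}^γ ∂_{xₙ}^δ [(∂_{ξ'}^α ∂_{x'}^β b)(x', xₙ/⟨ξ'⟩, ξ', ξₙ⟨ξ'⟩)]|
≤ C ⟨ξₙ⟩^{l-γ} ⟨ξ'⟩^{μ-|α|}` on `Q × ℝⁿ`. -/
def BS {k : ℕ} (μ l : ℝ) (b : Fn k ℂ) : Prop :=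
  ContDiff ℝ (⊤ : ℕ∞) (Fn.unc b) ∧
  ∀ (α β : Fin k → ℕ) (γ δ : ℕ) (Q : Set ((Fin k → ℝ) × ℝ)), IsCompact Q →
    ∃ C > 0, ∀ (x' : Fin k → ℝ) (xn : ℝ), (x', xn) ∈ Q →
      ∀ (ξ' : Fin k → ℝ) (ξn : ℝ),
        ‖(D2)^[γ] ((D1)^[δ]
            (fun u v => DxipM α (DxpM β b) x' (u / jbV ξ') ξ' (v * jbV ξ'))) xn ξn‖ ≤
          C * jb ξn ^ (l - (γ : ℝ)) * jbV ξ' ^ (μ - ∑ i, (α i : ℝ))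


open scoped ContDiff

section DirDeriv

variable {V E : Type*} [NormedAddCommGroup V] [NormedSpace ℝ V]
  [NormedAddCommGroup E] [NormedSpace ℝ E]

def dirDeriv (v : V) (F : V → E) : V → E := fun p => fderiv ℝ F p v

def iterDirDeriv (l : List V) (F : V → E) : V → E := l.foldr dirDeriv F

theorem contDiff_dirDeriv {F : V → E} (hF : ContDiff ℝ ∞ F) (v : V) :
    ContDiff ℝ ∞ (dirDeriv v F) :=
  (hF.fderiv_right le_rfl).clm_apply contDiff_const

theorem dirDeriv_dirDeriv {F : V → E} (hF : ContDiff ℝ ∞ F) (v w : V) (p : V) :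
    dirDeriv v (dirDeriv w F) p = fderiv ℝ (fderiv ℝ F) p v w := by
  have hF' : DifferentiableAt ℝ (fderiv ℝ F) p :=
    ((hF.fderiv_right (m := ∞) le_rfl).differentiable (by simp)) p
  change fderiv ℝ (fun q => fderiv ℝ F q w) p v = _
  simp [fderiv_clm_apply hF' (differentiableAt_const w)]

theorem dirDeriv_comm {F : V → E} (hF : ContDiff ℝ ∞ F) (v w : V) :
    dirDeriv v (dirDeriv w F) = dirDeriv w (dirDeriv v F) := by
  funext p
  rw [dirDeriv_dirDeriv hF, dirDeriv_dirDeriv hF]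
  exact (hF.contDiffAt.isSymmSndFDerivAt (by simpa using ENat.LEInfty.out)).eq v w

theorem contDiff_iterDirDeriv {F : V → E} (hF : ContDiff ℝ ∞ F) (l : List V) :
    ContDiff ℝ ∞ (iterDirDeriv l F) := by
  induction l with
  | nil => exact hF
  | cons v l ih => exact contDiff_dirDeriv ih v

theorem iterDirDeriv_append (l₁ l₂ : List V) (F : V → E) :
    iterDirDeriv (l₁ ++ l₂) F = iterDirDeriv l₁ (iterDirDeriv l₂ F) :=
  List.foldr_append

theorem iterDirDeriv_replicate (q : ℕ) (v : V) (F : V → E) :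
    iterDirDeriv (List.replicate q v) F = (dirDeriv v)^[q] F := by
  induction q with
  | zero => rfl
  | succ q ih =>
    rw [List.replicate_succ, iterDirDeriv, List.foldr_cons, ← iterDirDeriv, ih,
      Function.iterate_succ_apply']

theorem contDiff_iterate_dirDeriv {F : V → E} (hF : ContDiff ℝ ∞ F) (v : V) (q : ℕ) :
    ContDiff ℝ ∞ ((dirDeriv v)^[q] F) :=
  iterDirDeriv_replicate q v F ▸ contDiff_iterDirDeriv hF _

theorem iterDirDeriv_perm {F : V → E} (hF : ContDiff ℝ ∞ F) {l₁ l₂ : List V}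
    (h : l₁.Perm l₂) : iterDirDeriv l₁ F = iterDirDeriv l₂ F := by
  induction h with
  | nil => rfl
  | cons v _ ih => exact congrArg (dirDeriv v) ih
  | swap v w l => exact dirDeriv_comm (contDiff_iterDirDeriv hF l) w v
  | trans _ _ ih₁ ih₂ => exact ih₁.trans ih₂

theorem deriv_comp_eq_dirDeriv {F : V → E} (hF : Differentiable ℝ F) {γ : ℝ → V} {v : V}
    {t : ℝ} (hγ : HasDerivAt γ v t) : deriv (F ∘ γ) t = dirDeriv v F (γ t) :=
  ((hF (γ t)).hasFDerivAt.comp_hasDerivAt t hγ).deriv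

end DirDeriv

namespace Fn

variable {k : ℕ} {E : Type*} [NormedAddCommGroup E] [NormedSpace ℝ E]

abbrev Point (k : ℕ) := (Fin k → ℝ) × ℝ × (Fin k → ℝ) × ℝ

def eXn : Point k := (0, 1, 0, 0)

def eXin : Point k := (0, 0, 0, 1)

def eXp (i : Fin k) : Point k := (Pi.single i 1, 0, 0, 0)

def eXip (i : Fin k) : Point k := (0, 0, Pi.single i 1, 0)

theorem unc_Dxn {f : Fn k E} (hf : ContDiff ℝ ∞ f.unc) :
    (Dxn f).unc = dirDeriv eXn f.unc := by
  funext ⟨x', xn, ξ', ξn⟩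
  exact deriv_comp_eq_dirDeriv (hf.differentiable (by simp))
    ((hasDerivAt_const xn x').prodMk ((hasDerivAt_id xn).prodMk
      ((hasDerivAt_const xn ξ').prodMk (hasDerivAt_const xn ξn))))

theorem unc_Dxin {f : Fn k E} (hf : ContDiff ℝ ∞ f.unc) :
    (Dxin f).unc = dirDeriv eXin f.unc := by
  funext ⟨x', xn, ξ', ξn⟩
  exact deriv_comp_eq_dirDeriv (hf.differentiable (by simp))
    ((hasDerivAt_const ξn x').prodMk ((hasDerivAt_const ξn xn).prodMk
      ((hasDerivAt_const ξn ξ').prodMk (hasDerivAt_id ξn))))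

theorem unc_Dxp (i : Fin k) {f : Fn k E} (hf : ContDiff ℝ ∞ f.unc) :
    (Dxp i f).unc = dirDeriv (eXp i) f.unc := by
  funext ⟨x', xn, ξ', ξn⟩
  have h := deriv_comp_eq_dirDeriv (hf.differentiable (by simp))
    ((hasDerivAt_update x' i (x' i)).prodMk ((hasDerivAt_const _ xn).prodMk
      ((hasDerivAt_const _ ξ').prodMk (hasDerivAt_const _ ξn))))
  rw [Function.update_eq_self] at h
  exact h

theorem unc_Dxip (i : Fin k) {f : Fn k E} (hf : ContDiff ℝ ∞ f.unc) :
    (Dxip i f).unc = dirDeriv (eXip i) f.unc := by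
  funext ⟨x', xn, ξ', ξn⟩
  have h := deriv_comp_eq_dirDeriv (hf.differentiable (by simp))
    ((hasDerivAt_const _ x').prodMk ((hasDerivAt_const _ xn).prodMk
      ((hasDerivAt_update ξ' i (ξ' i)).prodMk (hasDerivAt_const _ ξn))))
  rw [Function.update_eq_self] at h
  exact h

theorem contDiff_unc_of_eq_iterDirDeriv {f g : Fn k E} {l : List (Point k)}
    (hf : ContDiff ℝ ∞ f.unc) (h : g.unc = iterDirDeriv l f.unc) : ContDiff ℝ ∞ g.unc :=
  h ▸ contDiff_iterDirDeriv hf l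

theorem unc_iterate {op : Fn k E → Fn k E} {v : Point k}
    (hop : ∀ g : Fn k E, ContDiff ℝ ∞ g.unc → (op g).unc = dirDeriv v g.unc) (q : ℕ)
    {f : Fn k E} (hf : ContDiff ℝ ∞ f.unc) :
    (op^[q] f).unc = iterDirDeriv (List.replicate q v) f.unc := by
  induction q generalizing f with
  | zero => rfl
  | succ q ih =>
    rw [Function.iterate_succ_apply, ih (hop f hf ▸ contDiff_dirDeriv hf v), hop f hf,
      iterDirDeriv_replicate, iterDirDeriv_replicate, Function.iterate_succ_apply]

theorem unc_foldr_iterate {op : Fin k → Fn k E → Fn k E} {e : Fin k → Point k}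
    (hop : ∀ i (g : Fn k E), ContDiff ℝ ∞ g.unc → (op i g).unc = dirDeriv (e i) g.unc)
    (β : Fin k → ℕ) (l : List (Fin k)) {f : Fn k E} (hf : ContDiff ℝ ∞ f.unc) :
    (l.foldr (fun i g => (op i)^[β i] g) f).unc
      = iterDirDeriv (l.flatMap fun i => List.replicate (β i) (e i)) f.unc := by
  induction l with
  | nil => rfl
  | cons i l ih =>
    rw [List.foldr_cons, unc_iterate (hop i) _ (contDiff_unc_of_eq_iterDirDeriv hf ih), ih,
      List.flatMap_cons, iterDirDeriv_append]

theorem unc_DxpM {f : Fn k E} (hf : ContDiff ℝ ∞ f.unc) (β : Fin k → ℕ) :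
    (DxpM β f).unc
      = iterDirDeriv ((List.finRange k).flatMap fun i => List.replicate (β i) (eXp i)) f.unc :=
  unc_foldr_iterate (fun i _ hg => unc_Dxp i hg) β _ hf

theorem unc_DxipM {f : Fn k E} (hf : ContDiff ℝ ∞ f.unc) (α : Fin k → ℕ) :
    (DxipM α f).unc
      = iterDirDeriv ((List.finRange k).flatMap fun i => List.replicate (α i) (eXip i)) f.unc :=
  unc_foldr_iterate (fun i _ hg => unc_Dxip i hg) α _ hf

theorem contDiff_unc_DxpM {f : Fn k E} (hf : ContDiff ℝ ∞ f.unc) (β : Fin k → ℕ) :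
    ContDiff ℝ ∞ (DxpM β f).unc :=
  contDiff_unc_of_eq_iterDirDeriv hf (unc_DxpM hf β)

theorem contDiff_unc_DxipM {f : Fn k E} (hf : ContDiff ℝ ∞ f.unc) (α : Fin k → ℕ) :
    ContDiff ℝ ∞ (DxipM α f).unc :=
  contDiff_unc_of_eq_iterDirDeriv hf (unc_DxipM hf α)

theorem iterate_dirDeriv_unc_DxipM_DxpM {a : Fn k E} (ha : ContDiff ℝ ∞ a.unc)
    (α β : Fin k → ℕ) (γ δ : ℕ) :
    (dirDeriv eXin)^[γ] ((dirDeriv eXn)^[δ] (DxipM α (DxpM β a)).unc)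
      = (DxpM β ((Dxn)^[δ] (DxipM α ((Dxin)^[γ] a)))).unc := by
  have h₁ := unc_iterate (fun _ hg => unc_Dxin hg) γ ha
  have s₁ := contDiff_unc_of_eq_iterDirDeriv ha h₁
  have h₂ := unc_DxipM s₁ α
  have h₃ := unc_iterate (fun _ hg => unc_Dxn hg) δ (contDiff_unc_DxipM s₁ α)
  have h₄ := unc_DxpM (contDiff_unc_of_eq_iterDirDeriv (contDiff_unc_DxipM s₁ α) h₃) β
  -- both sides differentiate `a.unc` along the same multiset of directions
  rw [h₄, h₃, h₂, h₁, unc_DxipM (contDiff_unc_DxpM ha β),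
    unc_DxpM ha β, ← iterDirDeriv_replicate, ← iterDirDeriv_replicate]
  simp only [← iterDirDeriv_append]
  refine iterDirDeriv_perm ha (List.perm_iff_count.2 fun x => ?_)
  simp only [List.count_append]
  omega

def rescale (x' ξ' : Fin k → ℝ) (c : ℝ) (G : Point k → E) : ℝ → ℝ → E :=
  fun u v => G (x', u / c, ξ', v * c)

variable {x' ξ' : Fin k → ℝ} {c : ℝ} {G : Point k → E}

theorem D1_rescale (hG : Differentiable ℝ G) :
    D1 (rescale x' ξ' c G) = c⁻¹ • rescale x' ξ' c (dirDeriv eXn G) := by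
  funext u v
  have hline : HasDerivAt (fun s : ℝ => ((x', s / c, ξ', v * c) : Point k)) (c⁻¹ • eXn) u := by
    simpa [eXn] using (hasDerivAt_const u x').prodMk (((hasDerivAt_id u).div_const c).prodMk
      ((hasDerivAt_const u ξ').prodMk (hasDerivAt_const u (v * c))))
  simp only [D1, rescale, Pi.smul_apply]
  rw [← Function.comp_def G, deriv_comp_eq_dirDeriv hG hline]
  exact (fderiv ℝ G _).map_smul c⁻¹ eXn

theorem D2_rescale (hG : Differentiable ℝ G) :
    D2 (rescale x' ξ' c G) = c • rescale x' ξ' c (dirDeriv eXin G) := by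
  funext u v
  have hline : HasDerivAt (fun t : ℝ => ((x', u / c, ξ', t * c) : Point k)) (c • eXin) v := by
    simpa [eXin] using (hasDerivAt_const v x').prodMk ((hasDerivAt_const v (u / c)).prodMk
      ((hasDerivAt_const v ξ').prodMk ((hasDerivAt_id v).mul_const c)))
  simp only [D2, rescale, Pi.smul_apply]
  rw [← Function.comp_def G, deriv_comp_eq_dirDeriv hG hline]
  exact (fderiv ℝ G _).map_smul c eXin

theorem D1_smul (r : ℝ) (H : ℝ → ℝ → E) : D1 (r • H) = r • D1 H :=
  funext₂ fun _ _ => deriv_fun_const_smul_field r _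

theorem D2_smul (r : ℝ) (H : ℝ → ℝ → E) : D2 (r • H) = r • D2 H :=
  funext₂ fun _ _ => deriv_fun_const_smul_field r _

theorem iterate_D2_smul (r : ℝ) (H : ℝ → ℝ → E) (γ : ℕ) : (D2)^[γ] (r • H) = r • (D2)^[γ] H :=
  Function.Commute.iterate_left (g := (r • ·)) (fun H => D2_smul r H) γ H

theorem iterate_D1_rescale (hG : ContDiff ℝ ∞ G) (δ : ℕ) :
    (D1)^[δ] (rescale x' ξ' c G) = c⁻¹ ^ δ • rescale x' ξ' c ((dirDeriv eXn)^[δ] G) := by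
  induction δ with
  | zero => simp
  | succ δ ih =>
    rw [Function.iterate_succ_apply', ih, D1_smul,
      D1_rescale ((contDiff_iterate_dirDeriv hG eXn δ).differentiable (by simp)),
      smul_smul, ← pow_succ, ← Function.iterate_succ_apply' (dirDeriv eXn)]

theorem iterate_D2_rescale (hG : ContDiff ℝ ∞ G) (γ : ℕ) :
    (D2)^[γ] (rescale x' ξ' c G) = c ^ γ • rescale x' ξ' c ((dirDeriv eXin)^[γ] G) := by
  induction γ with
  | zero => simp
  | succ γ ih =>
    rw [Function.iterate_succ_apply', ih, D2_smul,
      D2_rescale ((contDiff_iterate_dirDeriv hG eXin γ).differentiable (by simp)),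
      smul_smul, ← pow_succ, ← Function.iterate_succ_apply' (dirDeriv eXin)]

theorem iterate_D2_iterate_D1_rescale (hG : ContDiff ℝ ∞ G) (γ δ : ℕ) :
    (D2)^[γ] ((D1)^[δ] (rescale x' ξ' c G))
      = (c⁻¹ ^ δ * c ^ γ) • rescale x' ξ' c ((dirDeriv eXin)^[γ] ((dirDeriv eXn)^[δ] G)) := by
  rw [iterate_D1_rescale hG, iterate_D2_smul,
    iterate_D2_rescale (contDiff_iterate_dirDeriv hG _ _), smul_smul]

end Fn

theorem one_le_jb (t : ℝ) : 1 ≤ jb t :=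
  Real.one_le_sqrt.2 (by nlinarith [sq_nonneg t])

theorem one_le_jbV {k : ℕ} (v : Fin k → ℝ) : 1 ≤ jbV v :=
  Real.one_le_sqrt.2 (le_add_of_nonneg_right (Finset.sum_nonneg fun i _ => sq_nonneg (v i)))

theorem jbP_mul_jbV {k : ℕ} (v : Fin k → ℝ) (t : ℝ) : jbP v (t * jbV v) = jbV v * jb t := by
  have hv : 0 ≤ 1 + ∑ i, v i ^ 2 :=
    add_nonneg zero_le_one (Finset.sum_nonneg fun i _ => sq_nonneg (v i))
  rw [jbP, jb, jbV, ← Real.sqrt_mul hv, mul_pow, Real.sq_sqrt hv]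
  ring_nf

theorem rescaled_weight_le {c J S : ℝ} (hc : 1 ≤ c) (hJ : 1 ≤ J) (hS : 0 ≤ S) (m : ℝ)
    (γ δ : ℕ) :
    c⁻¹ ^ δ * c ^ γ * (c * J) ^ (m - (γ + S)) ≤ J ^ (m - γ) * c ^ (m - S) := by
  have hc₀ : 0 < c := zero_lt_one.trans_le hc
  have hinv : c⁻¹ ^ δ = c ^ (-(δ : ℝ)) := by rw [Real.rpow_neg hc₀.le, Real.rpow_natCast, inv_pow]
  calc c⁻¹ ^ δ * c ^ γ * (c * J) ^ (m - (γ + S))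
      = c ^ (m - δ - S) * J ^ (m - γ - S) := by
        rw [hinv, ← Real.rpow_natCast c γ, Real.mul_rpow hc₀.le (by linarith), ← mul_assoc,
          ← Real.rpow_add hc₀, ← Real.rpow_add hc₀]
        ring_nf
    _ ≤ c ^ (m - S) * J ^ (m - γ) :=
        mul_le_mul (Real.rpow_le_rpow_of_exponent_le hc (by linarith [Nat.cast_nonneg (α := ℝ) δ]))
          (Real.rpow_le_rpow_of_exponent_le hJ (by linarith)) (by positivity) (by positivity)
    _ = J ^ (m - γ) * c ^ (m - S) := mul_comm _ _

namespace Sm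

open Fn

variable {k : ℕ} {m : ℝ} {a : Fn k ℂ}

theorem norm_iterate_D2_iterate_D1_rescaled_le (ha : Sm m a) (α β : Fin k → ℕ) (γ δ : ℕ) :
    ∃ C > 0, ∀ (x' : Fin k → ℝ) (xn : ℝ) (ξ' : Fin k → ℝ) (ξn : ℝ),
      ‖(D2)^[γ] ((D1)^[δ]
          (fun u v => DxipM α (DxpM β a) x' (u / jbV ξ') ξ' (v * jbV ξ'))) xn ξn‖ ≤
        C * jb ξn ^ (m - (γ : ℝ)) * jbV ξ' ^ (m - ∑ i, (α i : ℝ)) := by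
  obtain ⟨C, hC, hbound⟩ := ha.2 γ δ α β
  refine ⟨C, hC, fun x' xn ξ' ξn => ?_⟩
  have hG := contDiff_unc_DxipM (contDiff_unc_DxpM ha.1 β) α
  have hS : 0 ≤ ∑ i, (α i : ℝ) := Finset.sum_nonneg fun i _ => Nat.cast_nonneg (α i)
  have hc := one_le_jbV ξ'
  change ‖(D2)^[γ] ((D1)^[δ] (rescale x' ξ' (jbV ξ') (DxipM α (DxpM β a)).unc)) xn ξn‖ ≤ _
  rw [iterate_D2_iterate_D1_rescale hG, iterate_dirDeriv_unc_DxipM_DxpM ha.1, Pi.smul_apply,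
    Pi.smul_apply, norm_smul, Real.norm_of_nonneg (by positivity)]
  set c := jbV ξ'
  calc c⁻¹ ^ δ * c ^ γ * ‖rescale x' ξ' c
          (DxpM β ((Dxn)^[δ] (DxipM α ((Dxin)^[γ] a)))).unc xn ξn‖
      ≤ c⁻¹ ^ δ * c ^ γ * (C * (c * jb ξn) ^ (m - ((γ : ℝ) + ∑ i, (α i : ℝ)))) := by
        rw [← jbP_mul_jbV]
        exact mul_le_mul_of_nonneg_left (hbound _ _ _ _) (by positivity)
    _ = C * (c⁻¹ ^ δ * c ^ γ * (c * jb ξn) ^ (m - ((γ : ℝ) + ∑ i, (α i : ℝ)))) := by ring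
    _ ≤ C * (jb ξn ^ (m - (γ : ℝ)) * c ^ (m - ∑ i, (α i : ℝ))) :=
        mul_le_mul_of_nonneg_left (rescaled_weight_le hc (one_le_jb ξn) hS m γ δ) hC.le
    _ = _ := by ring

theorem toBS (ha : Sm m a) : BS m m a := by
  refine ⟨ha.1, fun α β γ δ _ _ => ?_⟩
  obtain ⟨C, hC, h⟩ := ha.norm_iterate_D2_iterate_D1_rescaled_le α β γ δ
  exact ⟨C, hC, fun x' xn _ ξ' ξn => h x' xn ξ' ξn⟩

end Sm

theorem statement8_general {n : ℕ} (m : ℝ) (a : Fn (n - 1) ℂ) (ha : Sm m a) :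
    BS m m a ∧
    ∀ (γ δ : ℕ) (Q : Set ((Fin (n - 1) → ℝ) × ℝ)), IsCompact Q →
      ∃ C > 0, ∀ (x' : Fin (n - 1) → ℝ) (xn : ℝ), (x', xn) ∈ Q →
        ∀ (ξ' : Fin (n - 1) → ℝ) (ξn : ℝ),
          ‖(D2)^[γ] ((D1)^[δ]
              (fun u v => a x' (u / jbV ξ') ξ' (v * jbV ξ'))) xn ξn‖ ≤
            C * jbV ξ' ^ m * jb ξn ^ (m - (γ : ℝ)) := by
  refine ⟨ha.toBS, fun γ δ Q hQ => ?_⟩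
  obtain ⟨C, hC, h⟩ := ha.toBS.2 0 0 γ δ Q hQ
  refine ⟨C, hC, fun x' xn hx ξ' ξn => ?_⟩
  simpa [DxpM, DxipM, mul_right_comm] using h x' xn hx ξ' ξn

/-- Remark 4.3 and estimate (vero): every `a ∈ S^m(ℝⁿ × ℝⁿ)` belongs to
`BS^m(ℝ^{n-1}, ℝ^{n-1}; S^m(ℝ))`; in particular
`|∂_{ξₙ}^γ ∂_{xₙ}^δ [a(x', xₙ/⟨ξ'⟩, ξ', ξₙ⟨ξ'⟩)]| ≤ C ⟨ξ'⟩^m ⟨ξₙ⟩^{m-γ}`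
on `Q × ℝⁿ` for every compact `Q`. -/
theorem statement8 {n : ℕ} (hn : 2 ≤ n) (m : ℝ) (a : Fn (n - 1) ℂ) (ha : Sm m a) :
    BS m m a ∧
    ∀ (γ δ : ℕ) (Q : Set ((Fin (n - 1) → ℝ) × ℝ)), IsCompact Q →
      ∃ C > 0, ∀ (x' : Fin (n - 1) → ℝ) (xn : ℝ), (x', xn) ∈ Q →
        ∀ (ξ' : Fin (n - 1) → ℝ) (ξn : ℝ),
          ‖(D2)^[γ] ((D1)^[δ]
              (fun u v => a x' (u / jbV ξ') ξ' (v * jbV ξ'))) xn ξn‖ ≤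
            C * jbV ξ' ^ m * jb ξn ^ (m - (γ : ℝ)) :=
  statement8_general m a ha
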